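/- arXiv:1001.1799 — 2 statements merged into one kernel-verified Lean document; each statement's English description precedes it below -/
import Mathlib

section
/- Let X, Y_s, Y_t be finite random variables such that the channel p(y_s|x) is less noisy than p(y_t|x), i.e. for every random variable U with U → X → (Y_s,Y_t) a Markov chain, I(U;Y_s) ≥ I(U;Y_t). Then for any random variables W, Z with (W,Z) → X → (Y_s,Y_t) a Markov chain, we have I(Y_s; Z | W) ≥ I(Y_t; Z | W). -/
open scoped BigOperators

namespace LN

/-- A probability mass function on a finite sample space. -/
structure FinProb (Ω : Type) [Fintype Ω] where
  p : Ω → ℝ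
  nonneg : ∀ ω, 0 ≤ p ω
  sum_one : ∑ ω, p ω = 1

variable {Ω : Type} [Fintype Ω]

/-- Probability that the random variable `A` takes the value `a`. -/
noncomputable def prob (μ : FinProb Ω) {α : Type} [DecidableEq α] (A : Ω → α) (a : α) : ℝ :=
  ∑ ω, if A ω = a then μ.p ω else 0

/-- Shannon entropy of a finite random variable. -/
noncomputable def H (μ : FinProb Ω) {α : Type} [Fintype α] [DecidableEq α] (A : Ω → α) : ℝ :=
  ∑ a, Real.negMulLog (prob μ A a)

/-- Mutual information I(A;B). -/
noncomputable def I2 (μ : FinProb Ω) {α β : Type} [Fintype α] [DecidableEq α]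
    [Fintype β] [DecidableEq β] (A : Ω → α) (B : Ω → β) : ℝ :=
  H μ A + H μ B - H μ (fun ω => (A ω, B ω))

/-- Conditional mutual information I(A;B|C). -/
noncomputable def I2c (μ : FinProb Ω) {α β γ : Type} [Fintype α] [DecidableEq α]
    [Fintype β] [DecidableEq β] [Fintype γ] [DecidableEq γ]
    (A : Ω → α) (B : Ω → β) (C : Ω → γ) : ℝ :=
  H μ (fun ω => (A ω, C ω)) + H μ (fun ω => (B ω, C ω))
    - H μ (fun ω => (A ω, B ω, C ω)) - H μ C

/-- Markov chain A → B → C : A and C are conditionally independent given B. -/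
def Markov (μ : FinProb Ω) {α β γ : Type} [DecidableEq α] [DecidableEq β] [DecidableEq γ]
    (A : Ω → α) (B : Ω → β) (C : Ω → γ) : Prop :=
  ∀ a b c, prob μ (fun ω => (A ω, B ω, C ω)) (a, b, c) * prob μ B b
    = prob μ (fun ω => (A ω, B ω)) (a, b) * prob μ (fun ω => (B ω, C ω)) (b, c)

/-- The pair (X,Y) is distributed according to input law of X and channel W. -/
def HasChannel (μ : FinProb Ω) {𝒳 𝒴 : Type} [DecidableEq 𝒳] [DecidableEq 𝒴]
    (X : Ω → 𝒳) (Y : Ω → 𝒴) (W : 𝒳 → 𝒴 → ℝ) : Prop :=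
  ∀ x y, prob μ (fun ω => (X ω, Y ω)) (x, y) = prob μ X x * W x y

/-- The channel `Ws` is less noisy than `Wt` : for every auxiliary random variable `U`
with `U → X → (Ys, Yt)` a Markov chain (on any finite probability space, with the
marginal channels from `X` being `Ws` and `Wt`), we have I(U;Ys) ≥ I(U;Yt). -/
def LessNoisy {𝒳 𝒴s 𝒴t : Type} [Fintype 𝒳] [DecidableEq 𝒳] [Fintype 𝒴s] [DecidableEq 𝒴s]
    [Fintype 𝒴t] [DecidableEq 𝒴t] (Ws : 𝒳 → 𝒴s → ℝ) (Wt : 𝒳 → 𝒴t → ℝ) : Prop :=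
  ∀ (Ω' : Type) [Fintype Ω'] (μ : FinProb Ω') (𝒰 : Type) [Fintype 𝒰] [DecidableEq 𝒰]
    (U : Ω' → 𝒰) (X : Ω' → 𝒳) (Ys : Ω' → 𝒴s) (Yt : Ω' → 𝒴t),
    Markov μ U X (fun ω => (Ys ω, Yt ω)) →
    HasChannel μ X Ys Ws → HasChannel μ X Yt Wt →
    I2 μ U Yt ≤ I2 μ U Ys

/-- The n-letter memoryless (no feedback) condition: the joint law of (M, Xⁿ, Ysⁿ, Ytⁿ)
factors as p(m, xⁿ) ∏ᵢ W(y_{s,i}, y_{t,i} | xᵢ). -/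
def Memoryless (μ : FinProb Ω) {ℳ 𝒳 𝒴s 𝒴t : Type} [DecidableEq ℳ] [DecidableEq 𝒳]
    [DecidableEq 𝒴s] [DecidableEq 𝒴t] {n : ℕ}
    (M : Ω → ℳ) (X : Ω → Fin n → 𝒳) (Ys : Ω → Fin n → 𝒴s) (Yt : Ω → Fin n → 𝒴t)
    (W : 𝒳 → 𝒴s × 𝒴t → ℝ) : Prop :=
  ∀ m xs ys yt,
    prob μ (fun ω => (M ω, X ω, Ys ω, Yt ω)) (m, xs, ys, yt)
      = prob μ (fun ω => (M ω, X ω)) (m, xs) * ∏ i, W (xs i) (ys i, yt i)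

/-- The segment (Y_{a+1}, …, Y_{a+k}) of an n-letter random sequence. -/
def seg {𝒴 : Type} {n : ℕ} (Y : Ω → Fin n → 𝒴) (a k : ℕ) (h : a + k ≤ n) :
    Ω → (Fin k → 𝒴) :=
  fun ω l => Y ω ⟨a + l.val, by have := l.isLt; omega⟩

lemma prob_nonneg (μ : FinProb Ω) {α} [DecidableEq α] (A : Ω → α) (a : α) :
    0 ≤ prob μ A a :=
  Finset.sum_nonneg fun ω _ => by split <;> simp [μ.nonneg ω]

lemma prob_congr (μ : FinProb Ω) {α β} [DecidableEq α] [DecidableEq β]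
    (A : Ω → α) (B : Ω → β) (a : α) (b : β) (h : ∀ ω, A ω = a ↔ B ω = b) :
    prob μ A a = prob μ B b :=
  Finset.sum_congr rfl fun ω _ => by rw [if_congr (h ω) rfl rfl]

lemma prob_mono (μ : FinProb Ω) {α β} [DecidableEq α] [DecidableEq β]
    (A : Ω → α) (B : Ω → β) (a : α) (b : β) (h : ∀ ω, A ω = a → B ω = b) :
    prob μ A a ≤ prob μ B b :=
  Finset.sum_le_sum fun ω _ => by
    split
    · rw [if_pos (h ω ‹_›)]
    · split
      · exact μ.nonneg ω
      · exact le_refl 0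

lemma prob_sum_snd (μ : FinProb Ω) {α β} [DecidableEq α] [Fintype β] [DecidableEq β]
    (A : Ω → α) (B : Ω → β) (a : α) :
    ∑ b, prob μ (fun ω => (A ω, B ω)) (a, b) = prob μ A a := by
  unfold prob
  rw [Finset.sum_comm]
  refine Finset.sum_congr rfl fun ω _ => ?_
  simp only [Prod.mk.injEq]
  by_cases h : A ω = a
  · simp [h]
  · simp [h]


/-- Conditional probability measure given A = a. -/
noncomputable def cond (μ : FinProb Ω) {α} [DecidableEq α] (A : Ω → α) (a : α)
    (h : 0 < prob μ A a) : FinProb Ω where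
  p ω := (if A ω = a then μ.p ω else 0) / prob μ A a
  nonneg ω := div_nonneg (by split <;> simp [μ.nonneg ω]) h.le
  sum_one := by rw [← Finset.sum_div]; exact div_self h.ne'

lemma prob_cond (μ : FinProb Ω) {α β} [DecidableEq α] [DecidableEq β]
    (A : Ω → α) (a : α) (h : 0 < prob μ A a) (B : Ω → β) (b : β) :
    prob (cond μ A a h) B b = prob μ (fun ω => (B ω, A ω)) (b, a) / prob μ A a := by
  unfold prob
  have key : ∀ ω, (if B ω = b then (cond μ A a h).p ω else 0)
      = (if (B ω, A ω) = (b, a) then μ.p ω else 0) / (∑ ω, if A ω = a then μ.p ω else 0) := by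
    intro ω
    by_cases hb : B ω = b <;> by_cases ha : A ω = a <;> simp [cond, prob, hb, ha]
  simp only [key]
  rw [← Finset.sum_div]

/-- Entropy under reindexing by an equivalence. -/
lemma H_equiv (μ : FinProb Ω) {α α'} [Fintype α] [DecidableEq α] [Fintype α'] [DecidableEq α']
    (e : α ≃ α') (A : Ω → α) :
    H μ (fun ω => e (A ω)) = H μ A := by
  unfold H
  rw [← Equiv.sum_comp e (fun a' => Real.negMulLog (prob μ (fun ω => e (A ω)) a'))]
  refine Finset.sum_congr rfl fun a _ => ?_
  congr 1
  exact prob_congr μ _ _ _ _ fun ω => by simp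

noncomputable def condTerm (μ : FinProb Ω) {α γ} [Fintype α] [DecidableEq α] [DecidableEq γ]
    (C : Ω → γ) (c : γ) (A : Ω → α) : ℝ :=
  if h : 0 < prob μ C c then prob μ C c * H (cond μ C c h) A else 0

lemma H_pair_decomp (μ : FinProb Ω) {α γ} [Fintype α] [DecidableEq α] [Fintype γ] [DecidableEq γ]
    (A : Ω → α) (C : Ω → γ) :
    H μ (fun ω => (A ω, C ω)) = H μ C + ∑ c, condTerm μ C c A := by
  unfold H
  rw [Fintype.sum_prod_type_right, ← Finset.sum_add_distrib]
  refine Finset.sum_congr rfl fun c _ => ?_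
  by_cases h : 0 < prob μ C c
  · rw [condTerm, dif_pos h]
    have key : ∀ a, prob μ (fun ω => (A ω, C ω)) (a, c)
        = prob μ C c * prob (cond μ C c h) A a := by
      intro a
      rw [prob_cond]
      field_simp
    calc ∑ a, Real.negMulLog (prob μ (fun ω => (A ω, C ω)) (a, c))
        = ∑ a, (prob (cond μ C c h) A a * Real.negMulLog (prob μ C c)
            + prob μ C c * Real.negMulLog (prob (cond μ C c h) A a)) := by
          refine Finset.sum_congr rfl fun a _ => ?_
          rw [key a, Real.negMulLog_mul]
      _ = Real.negMulLog (prob μ C c) + prob μ C c * H (cond μ C c h) A := by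
          rw [Finset.sum_add_distrib, ← Finset.sum_mul, ← Finset.mul_sum]
          have : ∑ a, prob (cond μ C c h) A a = 1 := by
            unfold prob
            rw [Finset.sum_comm]
            calc ∑ ω, ∑ a, (if A ω = a then (cond μ C c h).p ω else 0)
                = ∑ ω, (cond μ C c h).p ω := by
                  refine Finset.sum_congr rfl fun ω _ => ?_
                  simp
              _ = 1 := (cond μ C c h).sum_one
          rw [this, one_mul, H]
  · have hc : prob μ C c = 0 := le_antisymm (not_lt.mp h) (prob_nonneg μ C c)
    have : ∀ a, prob μ (fun ω => (A ω, C ω)) (a, c) = 0 := fun a =>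
      le_antisymm (hc ▸ prob_mono μ _ C (a, c) c fun ω hω => by
        simpa using congrArg Prod.snd hω) (prob_nonneg μ _ _)
    rw [condTerm, dif_neg h]
    simp [this, hc]

noncomputable def condTermI (μ : FinProb Ω) {α β γ} [Fintype α] [DecidableEq α]
    [Fintype β] [DecidableEq β] [DecidableEq γ]
    (C : Ω → γ) (c : γ) (A : Ω → α) (B : Ω → β) : ℝ :=
  if h : 0 < prob μ C c then prob μ C c * I2 (cond μ C c h) A B else 0

lemma I2c_decomp (μ : FinProb Ω) {α β γ} [Fintype α] [DecidableEq α]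
    [Fintype β] [DecidableEq β] [Fintype γ] [DecidableEq γ]
    (A : Ω → α) (B : Ω → β) (C : Ω → γ) :
    I2c μ A B C = ∑ c, condTermI μ C c A B := by
  have hassoc : H μ (fun ω => (A ω, B ω, C ω)) = H μ (fun ω => ((A ω, B ω), C ω)) :=
    by
    rw [show (fun ω => (A ω, B ω, C ω))
        = (fun ω => (Equiv.prodAssoc α β γ) ((A ω, B ω), C ω)) from rfl]
    exact H_equiv μ _ _
  unfold I2c
  rw [hassoc, H_pair_decomp μ A C, H_pair_decomp μ B C,
    H_pair_decomp μ (fun ω => (A ω, B ω)) C]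
  have : ∀ c, condTermI μ C c A B = condTerm μ C c A + condTerm μ C c B
      - condTerm μ C c (fun ω => (A ω, B ω)) := by
    intro c
    unfold condTermI condTerm
    by_cases h : 0 < prob μ C c
    · simp only [dif_pos h, I2]; ring
    · simp [dif_neg h]
  simp only [this]
  rw [Finset.sum_sub_distrib, Finset.sum_add_distrib]
  ring

lemma I2_comm (μ : FinProb Ω) {α β} [Fintype α] [DecidableEq α] [Fintype β] [DecidableEq β]
    (A : Ω → α) (B : Ω → β) : I2 μ A B = I2 μ B A := by
  unfold I2
  have : H μ (fun ω => (A ω, B ω)) = H μ (fun ω => (B ω, A ω)) := by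
    rw [show (fun ω => (B ω, A ω)) = (fun ω => (Equiv.prodComm α β) (A ω, B ω)) from rfl]
    rw [H_equiv μ (Equiv.prodComm α β) (fun ω => (A ω, B ω))]
  rw [this]; ring

lemma prob_sum_family (μ : FinProb Ω) {α β γ : Type} [DecidableEq α] [Fintype β]
    [DecidableEq γ] (A : Ω → α) (a : α) (C : Ω → γ) (c : β → γ)
    (hinj : Function.Injective c) (hiff : ∀ ω, A ω = a ↔ ∃ b, C ω = c b) :
    ∑ b, prob μ C (c b) = prob μ A a := by
  unfold prob
  rw [Finset.sum_comm]
  refine Finset.sum_congr rfl fun ω _ => ?_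
  by_cases h : A ω = a
  · obtain ⟨b0, hb0⟩ := (hiff ω).mp h
    rw [if_pos h, Finset.sum_eq_single b0]
    · rw [if_pos hb0]
    · intro b _ hne
      rw [if_neg]
      intro hC
      exact hne (hinj (hC ▸ hb0))
    · intro habs; exact absurd (Finset.mem_univ b0) habs
  · rw [if_neg h, Finset.sum_eq_zero]
    intro b _
    rw [if_neg]
    intro hC
    exact h ((hiff ω).mpr ⟨b, hC⟩)

set_option maxHeartbeats 2000000 in
/-- If the channel of `Ys` is less noisy than that of `Yt`, then for any
`W, Z` with `(W,Z) → X → (Ys,Yt)` a Markov chain, I(Ys;Z|W) ≥ I(Yt;Z|W). -/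
theorem stmt0 {Ω 𝒳 𝒴s 𝒴t 𝒲 𝒵 : Type} [Fintype Ω] [Fintype 𝒳] [DecidableEq 𝒳]
    [Fintype 𝒴s] [DecidableEq 𝒴s] [Fintype 𝒴t] [DecidableEq 𝒴t]
    [Fintype 𝒲] [DecidableEq 𝒲] [Fintype 𝒵] [DecidableEq 𝒵]
    (μ : FinProb Ω) (X : Ω → 𝒳) (Ys : Ω → 𝒴s) (Yt : Ω → 𝒴t) (Wrv : Ω → 𝒲) (Z : Ω → 𝒵)
    (Ws : 𝒳 → 𝒴s → ℝ) (Wt : 𝒳 → 𝒴t → ℝ)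
    (hChs : HasChannel μ X Ys Ws) (hCht : HasChannel μ X Yt Wt)
    (hLN : LessNoisy Ws Wt)
    (hM : Markov μ (fun ω => (Wrv ω, Z ω)) X (fun ω => (Ys ω, Yt ω))) :
    I2c μ Yt Z Wrv ≤ I2c μ Ys Z Wrv := by
  rw [I2c_decomp μ Yt Z Wrv, I2c_decomp μ Ys Z Wrv]
  refine Finset.sum_le_sum fun w _ => ?_
  unfold condTermI
  by_cases h : 0 < prob μ Wrv w
  · simp only [dif_pos h]
    set ν := cond μ Wrv w h with hν
    -- marginalization facts at this w
    have margYt : ∀ z x ys, ∑ yt, prob μ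
          (fun ω => ((Wrv ω, Z ω), X ω, (Ys ω, Yt ω))) ((w, z), x, (ys, yt))
        = prob μ (fun ω => ((Wrv ω, Z ω), (X ω, Ys ω))) ((w, z), (x, ys)) := by
      intro z x ys
      refine prob_sum_family μ _ _ _ (fun yt => ((w, z), x, (ys, yt)))
        (fun a b hab => by simpa using hab) (fun ω => ?_)
      constructor
      · intro hω; exact ⟨Yt ω, by simp_all [Prod.ext_iff]⟩
      · rintro ⟨yt, hω⟩; simp_all [Prod.ext_iff]
    have margYs : ∀ z x yt, ∑ ys, prob μ
          (fun ω => ((Wrv ω, Z ω), X ω, (Ys ω, Yt ω))) ((w, z), x, (ys, yt))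
        = prob μ (fun ω => ((Wrv ω, Z ω), (X ω, Yt ω))) ((w, z), (x, yt)) := by
      intro z x yt
      refine prob_sum_family μ _ _ _ (fun ys => ((w, z), x, (ys, yt)))
        (fun a b hab => by simpa using hab) (fun ω => ?_)
      constructor
      · intro hω; exact ⟨Ys ω, by simp_all [Prod.ext_iff]⟩
      · rintro ⟨ys, hω⟩; simp_all [Prod.ext_iff]
    have margZ4s : ∀ x ys, ∑ z, prob μ
          (fun ω => ((Wrv ω, Z ω), (X ω, Ys ω))) ((w, z), (x, ys))
        = prob μ (fun ω => (Wrv ω, (X ω, Ys ω))) (w, (x, ys)) := by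
      intro x ys
      refine prob_sum_family μ _ _ _ (fun z => ((w, z), (x, ys)))
        (fun a b hab => by simpa using hab) (fun ω => ?_)
      constructor
      · intro hω; exact ⟨Z ω, by simp_all [Prod.ext_iff]⟩
      · rintro ⟨z, hω⟩; simp_all [Prod.ext_iff]
    have margZ4t : ∀ x yt, ∑ z, prob μ
          (fun ω => ((Wrv ω, Z ω), (X ω, Yt ω))) ((w, z), (x, yt))
        = prob μ (fun ω => (Wrv ω, (X ω, Yt ω))) (w, (x, yt)) := by
      intro x yt
      refine prob_sum_family μ _ _ _ (fun z => ((w, z), (x, yt)))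
        (fun a b hab => by simpa using hab) (fun ω => ?_)
      constructor
      · intro hω; exact ⟨Z ω, by simp_all [Prod.ext_iff]⟩
      · rintro ⟨z, hω⟩; simp_all [Prod.ext_iff]
    have margZ3 : ∀ x, ∑ z, prob μ (fun ω => ((Wrv ω, Z ω), X ω)) ((w, z), x)
        = prob μ (fun ω => (Wrv ω, X ω)) (w, x) := by
      intro x
      refine prob_sum_family μ _ _ _ (fun z => ((w, z), x))
        (fun a b hab => by simpa using hab) (fun ω => ?_)
      constructor
      · intro hω; exact ⟨Z ω, by simp_all [Prod.ext_iff]⟩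
      · rintro ⟨z, hω⟩; simp_all [Prod.ext_iff]
    have margZ5 : ∀ x ys yt, ∑ z, prob μ
          (fun ω => ((Wrv ω, Z ω), X ω, (Ys ω, Yt ω))) ((w, z), x, (ys, yt))
        = prob μ (fun ω => (Wrv ω, (X ω, (Ys ω, Yt ω)))) (w, (x, (ys, yt))) := by
      intro x ys yt
      refine prob_sum_family μ _ _ _ (fun z => ((w, z), x, (ys, yt)))
        (fun a b hab => by simpa using hab) (fun ω => ?_)
      constructor
      · intro hω; exact ⟨Z ω, by simp_all [Prod.ext_iff]⟩
      · rintro ⟨z, hω⟩; simp_all [Prod.ext_iff]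
    have margMu_s : ∀ x ys, ∑ yt, prob μ
          (fun ω => (X ω, (Ys ω, Yt ω))) (x, (ys, yt))
        = prob μ (fun ω => (X ω, Ys ω)) (x, ys) := by
      intro x ys
      refine prob_sum_family μ _ _ _ (fun yt => (x, (ys, yt)))
        (fun a b hab => by simpa using hab) (fun ω => ?_)
      constructor
      · intro hω; exact ⟨Yt ω, by simp_all [Prod.ext_iff]⟩
      · rintro ⟨yt, hω⟩; simp_all [Prod.ext_iff]
    have margMu_t : ∀ x yt, ∑ ys, prob μ
          (fun ω => (X ω, (Ys ω, Yt ω))) (x, (ys, yt))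
        = prob μ (fun ω => (X ω, Yt ω)) (x, yt) := by
      intro x yt
      refine prob_sum_family μ _ _ _ (fun ys => (x, (ys, yt)))
        (fun a b hab => by simpa using hab) (fun ω => ?_)
      constructor
      · intro hω; exact ⟨Ys ω, by simp_all [Prod.ext_iff]⟩
      · rintro ⟨ys, hω⟩; simp_all [Prod.ext_iff]
    -- zero lemmas when prob X x = 0
    have zero_of_X : ∀ x, prob μ X x = 0 → ∀ {α : Type} [inst : DecidableEq α]
        (A : Ω → α) (a : α), (∀ ω, A ω = a → X ω = x) → prob μ A a = 0 := by
      intro x hx α _ A a himp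
      exact le_antisymm (hx ▸ prob_mono μ A X a x himp) (prob_nonneg μ A a)
    -- key channel fact for Ys
    have key_s : ∀ x ys, prob μ (fun ω => (Wrv ω, (X ω, Ys ω))) (w, (x, ys))
        = prob μ (fun ω => (Wrv ω, X ω)) (w, x) * Ws x ys := by
      intro x ys
      by_cases hx : 0 < prob μ X x
      · have main : prob μ (fun ω => (Wrv ω, (X ω, Ys ω))) (w, (x, ys)) * prob μ X x
            = prob μ (fun ω => (Wrv ω, X ω)) (w, x) * (prob μ X x * Ws x ys) := by
          calc prob μ (fun ω => (Wrv ω, (X ω, Ys ω))) (w, (x, ys)) * prob μ X x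
              = (∑ z, ∑ yt, prob μ (fun ω => ((Wrv ω, Z ω), X ω, (Ys ω, Yt ω)))
                  ((w, z), x, (ys, yt))) * prob μ X x := by
                rw [show (∑ z, ∑ yt, prob μ (fun ω => ((Wrv ω, Z ω), X ω, (Ys ω, Yt ω)))
                    ((w, z), x, (ys, yt))) = prob μ (fun ω => (Wrv ω, (X ω, Ys ω))) (w, (x, ys))
                  from by
                    rw [← margZ4s x ys]
                    exact Finset.sum_congr rfl fun z _ => margYt z x ys]
            _ = (∑ z, prob μ (fun ω => ((Wrv ω, Z ω), X ω)) ((w, z), x))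
                * (∑ yt, prob μ (fun ω => (X ω, (Ys ω, Yt ω))) (x, (ys, yt))) := by
                rw [Finset.sum_mul_sum, Finset.sum_mul]
                refine Finset.sum_congr rfl fun z _ => ?_
                rw [Finset.sum_mul]
                exact Finset.sum_congr rfl fun yt _ => hM (w, z) x (ys, yt)
            _ = prob μ (fun ω => (Wrv ω, X ω)) (w, x) * (prob μ X x * Ws x ys) := by
                rw [margZ3 x, margMu_s x ys, hChs x ys]
        have main' : prob μ (fun ω => (Wrv ω, (X ω, Ys ω))) (w, (x, ys)) * prob μ X x
            = (prob μ (fun ω => (Wrv ω, X ω)) (w, x) * Ws x ys) * prob μ X x := by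
          linear_combination main
        exact mul_right_cancel₀ hx.ne' main'
      · have hx0 : prob μ X x = 0 := le_antisymm (not_lt.mp hx) (prob_nonneg μ X x)
        rw [zero_of_X x hx0 _ _ (fun ω hω => by simp_all [Prod.ext_iff]),
          zero_of_X x hx0 _ _ (fun ω hω => by simp_all [Prod.ext_iff])]
        ring
    -- key channel fact for Yt
    have key_t : ∀ x yt, prob μ (fun ω => (Wrv ω, (X ω, Yt ω))) (w, (x, yt))
        = prob μ (fun ω => (Wrv ω, X ω)) (w, x) * Wt x yt := by
      intro x yt
      by_cases hx : 0 < prob μ X x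
      · have main : prob μ (fun ω => (Wrv ω, (X ω, Yt ω))) (w, (x, yt)) * prob μ X x
            = prob μ (fun ω => (Wrv ω, X ω)) (w, x) * (prob μ X x * Wt x yt) := by
          calc prob μ (fun ω => (Wrv ω, (X ω, Yt ω))) (w, (x, yt)) * prob μ X x
              = (∑ z, ∑ ys, prob μ (fun ω => ((Wrv ω, Z ω), X ω, (Ys ω, Yt ω)))
                  ((w, z), x, (ys, yt))) * prob μ X x := by
                rw [show (∑ z, ∑ ys, prob μ (fun ω => ((Wrv ω, Z ω), X ω, (Ys ω, Yt ω)))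
                    ((w, z), x, (ys, yt))) = prob μ (fun ω => (Wrv ω, (X ω, Yt ω))) (w, (x, yt))
                  from by
                    rw [← margZ4t x yt]
                    exact Finset.sum_congr rfl fun z _ => margYs z x yt]
            _ = (∑ z, prob μ (fun ω => ((Wrv ω, Z ω), X ω)) ((w, z), x))
                * (∑ ys, prob μ (fun ω => (X ω, (Ys ω, Yt ω))) (x, (ys, yt))) := by
                rw [Finset.sum_mul_sum, Finset.sum_mul]
                refine Finset.sum_congr rfl fun z _ => ?_
                rw [Finset.sum_mul]
                exact Finset.sum_congr rfl fun ys _ => hM (w, z) x (ys, yt)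
            _ = prob μ (fun ω => (Wrv ω, X ω)) (w, x) * (prob μ X x * Wt x yt) := by
                rw [margZ3 x, margMu_t x yt, hCht x yt]
        have main' : prob μ (fun ω => (Wrv ω, (X ω, Yt ω))) (w, (x, yt)) * prob μ X x
            = (prob μ (fun ω => (Wrv ω, X ω)) (w, x) * Wt x yt) * prob μ X x := by
          linear_combination main
        exact mul_right_cancel₀ hx.ne' main'
      · have hx0 : prob μ X x = 0 := le_antisymm (not_lt.mp hx) (prob_nonneg μ X x)
        rw [zero_of_X x hx0 _ _ (fun ω hω => by simp_all [Prod.ext_iff]),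
          zero_of_X x hx0 _ _ (fun ω hω => by simp_all [Prod.ext_iff])]
        ring
    -- key Markov fact
    have key_m : ∀ z x ys yt,
        prob μ (fun ω => ((Wrv ω, Z ω), X ω, (Ys ω, Yt ω))) ((w, z), x, (ys, yt))
          * prob μ (fun ω => (Wrv ω, X ω)) (w, x)
        = prob μ (fun ω => ((Wrv ω, Z ω), X ω)) ((w, z), x)
          * prob μ (fun ω => (Wrv ω, (X ω, (Ys ω, Yt ω)))) (w, (x, (ys, yt))) := by
      intro z x ys yt
      by_cases hx : 0 < prob μ X x
      · have ii : prob μ (fun ω => (Wrv ω, (X ω, (Ys ω, Yt ω)))) (w, (x, (ys, yt)))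
              * prob μ X x
            = prob μ (fun ω => (Wrv ω, X ω)) (w, x)
              * prob μ (fun ω => (X ω, (Ys ω, Yt ω))) (x, (ys, yt)) := by
          calc prob μ (fun ω => (Wrv ω, (X ω, (Ys ω, Yt ω)))) (w, (x, (ys, yt))) * prob μ X x
              = (∑ z', prob μ (fun ω => ((Wrv ω, Z ω), X ω, (Ys ω, Yt ω)))
                  ((w, z'), x, (ys, yt))) * prob μ X x := by rw [margZ5 x ys yt]
            _ = ∑ z', prob μ (fun ω => ((Wrv ω, Z ω), X ω, (Ys ω, Yt ω)))
                  ((w, z'), x, (ys, yt)) * prob μ X x := by rw [Finset.sum_mul]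
            _ = ∑ z', prob μ (fun ω => ((Wrv ω, Z ω), X ω)) ((w, z'), x)
                  * prob μ (fun ω => (X ω, (Ys ω, Yt ω))) (x, (ys, yt)) := by
                exact Finset.sum_congr rfl fun z' _ => hM (w, z') x (ys, yt)
            _ = prob μ (fun ω => (Wrv ω, X ω)) (w, x)
                  * prob μ (fun ω => (X ω, (Ys ω, Yt ω))) (x, (ys, yt)) := by
                rw [← Finset.sum_mul, margZ3 x]
        apply mul_right_cancel₀ hx.ne'
        linear_combination prob μ (fun ω => (Wrv ω, X ω)) (w, x) * hM (w, z) x (ys, yt)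
          - prob μ (fun ω => ((Wrv ω, Z ω), X ω)) ((w, z), x) * ii
      · have hx0 : prob μ X x = 0 := le_antisymm (not_lt.mp hx) (prob_nonneg μ X x)
        rw [zero_of_X x hx0 _ _ (fun ω hω => by simp_all [Prod.ext_iff]),
          zero_of_X x hx0 _ _ (fun ω hω => by simp_all [Prod.ext_iff]),
          zero_of_X x hx0 _ _ (fun ω hω => by simp_all [Prod.ext_iff])]
        ring
    -- conditional measure facts
    have hCsv : HasChannel ν X Ys Ws := by
      intro x ys
      rw [hν, prob_cond, prob_cond]
      rw [show prob μ (fun ω => ((X ω, Ys ω), Wrv ω)) ((x, ys), w)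
          = prob μ (fun ω => (Wrv ω, (X ω, Ys ω))) (w, (x, ys)) from
        prob_congr μ _ _ _ _ fun ω => by simp [Prod.ext_iff]; tauto]
      rw [show prob μ (fun ω => (X ω, Wrv ω)) (x, w)
          = prob μ (fun ω => (Wrv ω, X ω)) (w, x) from
        prob_congr μ _ _ _ _ fun ω => by simp [Prod.ext_iff]; tauto]
      rw [key_s x ys]
      ring
    have hCtv : HasChannel ν X Yt Wt := by
      intro x yt
      rw [hν, prob_cond, prob_cond]
      rw [show prob μ (fun ω => ((X ω, Yt ω), Wrv ω)) ((x, yt), w)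
          = prob μ (fun ω => (Wrv ω, (X ω, Yt ω))) (w, (x, yt)) from
        prob_congr μ _ _ _ _ fun ω => by simp [Prod.ext_iff]; tauto]
      rw [show prob μ (fun ω => (X ω, Wrv ω)) (x, w)
          = prob μ (fun ω => (Wrv ω, X ω)) (w, x) from
        prob_congr μ _ _ _ _ fun ω => by simp [Prod.ext_iff]; tauto]
      rw [key_t x yt]
      ring
    have hMv : Markov ν Z X (fun ω => (Ys ω, Yt ω)) := by
      rintro z x ⟨ys, yt⟩
      rw [hν, prob_cond, prob_cond, prob_cond, prob_cond]
      rw [show prob μ (fun ω => ((Z ω, X ω, (Ys ω, Yt ω)), Wrv ω)) ((z, x, (ys, yt)), w)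
          = prob μ (fun ω => ((Wrv ω, Z ω), X ω, (Ys ω, Yt ω))) ((w, z), x, (ys, yt)) from
        prob_congr μ _ _ _ _ fun ω => by simp [Prod.ext_iff]; tauto]
      rw [show prob μ (fun ω => (X ω, Wrv ω)) (x, w)
          = prob μ (fun ω => (Wrv ω, X ω)) (w, x) from
        prob_congr μ _ _ _ _ fun ω => by simp [Prod.ext_iff]; tauto]
      rw [show prob μ (fun ω => ((Z ω, X ω), Wrv ω)) ((z, x), w)
          = prob μ (fun ω => ((Wrv ω, Z ω), X ω)) ((w, z), x) from
        prob_congr μ _ _ _ _ fun ω => by simp [Prod.ext_iff]; tauto]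
      rw [show prob μ (fun ω => ((X ω, (Ys ω, Yt ω)), Wrv ω)) ((x, (ys, yt)), w)
          = prob μ (fun ω => (Wrv ω, (X ω, (Ys ω, Yt ω)))) (w, (x, (ys, yt))) from
        prob_congr μ _ _ _ _ fun ω => by simp [Prod.ext_iff]; tauto]
      rw [div_mul_div_comm, div_mul_div_comm, key_m z x ys yt]
    have hle : I2 ν Z Yt ≤ I2 ν Z Ys := hLN Ω ν 𝒵 Z X Ys Yt hMv hCsv hCtv
    rw [I2_comm ν Yt Z, I2_comm ν Ys Z]
    exact mul_le_mul_of_nonneg_left hle h.le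
  · simp only [dif_neg h]
    exact le_refl 0
end LN
end

section
/- Factorization lemma: Suppose a k-receiver less noisy broadcast channel has virtual receivers V_1,…,V_{k−1} with X → V_1 → ⋯ → V_{k−1} a (single-letter) Markov chain. Then for the n-letter extension one may take a joint distribution of the form p(x^n, y_1^n,…,y_k^n, v_1^n,…,v_{k−1}^n) = ∏_{i=1}^n p(x_i|x^{i−1}) p(y_{1,i},…,y_{k,i}|x_i) p(v_{1,i}|x_i) ∏_{j=2}^{k−1} p(v_{j,i}|v_{j−1,i}), and under this distribution, for every 1 ≤ s ≤ k−1 and every i, the Markov chain V_{s,1}^{i−1} → V_{s−1,1}^{i−1} → (X^n, Y_1^n, …, Y_k^n, M_1, …, M_k) holds, where V_0 = X. -/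
open scoped BigOperators

namespace LN

variable {Ω : Type} [Fintype Ω]

-- decidability of ∀ over a proof of a decidable prop
instance decForallProp {p : Prop} [hp : Decidable p] {q : p → Prop} [hq : ∀ h, Decidable (q h)] :
    Decidable (∀ h : p, q h) :=
  match hp with
  | isTrue h =>
    match hq h with
    | isTrue hh => isTrue fun h' => by rwa [proof_irrel h' h]
    | isFalse hh => isFalse fun H => hh (H h)
  | isFalse h => isTrue fun h' => absurd h' h

lemma prob_comp (μ : FinProb Ω) {α β : Type} [Fintype α] [DecidableEq α] [DecidableEq β]
    (T : Ω → α) (f : α → β) (v : β) :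
    prob μ (fun ω => f (T ω)) v = ∑ u : α, if f u = v then prob μ T u else 0 := by
  unfold prob
  have h1 : ∀ u : α, (if f u = v then ∑ ω, (if T ω = u then μ.p ω else 0) else 0)
      = ∑ ω, (if T ω = u then (if f u = v then μ.p ω else 0) else 0) := by
    intro u; split_ifs with h <;> simp
  rw [Finset.sum_congr rfl (fun u _ => h1 u), Finset.sum_comm]
  refine Finset.sum_congr rfl fun ω _ => ?_
  rw [Finset.sum_ite_eq, if_pos (Finset.mem_univ _)]

lemma markov_of_factor (μ : FinProb Ω) {α β γ : Type} [Fintype α] [DecidableEq α]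
    [Fintype β] [DecidableEq β] [Fintype γ] [DecidableEq γ]
    (A : Ω → α) (B : Ω → β) (C : Ω → γ) (Φ : β → γ → ℝ) (Ψ : α → β → ℝ)
    (h : ∀ a b c, prob μ (fun ω => (A ω, B ω, C ω)) (a, b, c) = Φ b c * Ψ a b) :
    Markov μ A B C := by
  have M2 : ∀ a b, prob μ (fun ω => (A ω, B ω)) (a, b)
      = ∑ c, prob μ (fun ω => (A ω, B ω, C ω)) (a, b, c) := by
    intro a b
    unfold prob
    rw [Finset.sum_comm]
    refine Finset.sum_congr rfl fun ω _ => ?_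
    by_cases hA : A ω = a <;> by_cases hB : B ω = b <;>
      simp [Prod.mk.injEq, hA, hB, Finset.sum_ite_eq]
  have M3 : ∀ b c, prob μ (fun ω => (B ω, C ω)) (b, c)
      = ∑ a, prob μ (fun ω => (A ω, B ω, C ω)) (a, b, c) := by
    intro b c
    unfold prob
    rw [Finset.sum_comm]
    refine Finset.sum_congr rfl fun ω _ => ?_
    by_cases hB : B ω = b <;> by_cases hC : C ω = c <;>
      simp [Prod.mk.injEq, hB, hC, Finset.sum_ite_eq]
  have M0 : ∀ b, prob μ B b = ∑ c, prob μ (fun ω => (B ω, C ω)) (b, c) := by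
    intro b
    unfold prob
    rw [Finset.sum_comm]
    refine Finset.sum_congr rfl fun ω _ => ?_
    by_cases hB : B ω = b <;> simp [Prod.mk.injEq, hB, Finset.sum_ite_eq]
  intro a b c
  rw [h, M0, M2, M3]
  simp only [h, M3]
  have e1 : (∑ c' : γ, ∑ a' : α, Φ b c' * Ψ a' b)
      = (∑ c' : γ, Φ b c') * (∑ a' : α, Ψ a' b) := by
    calc (∑ c' : γ, ∑ a' : α, Φ b c' * Ψ a' b)
        = ∑ c' : γ, Φ b c' * ∑ a' : α, Ψ a' b :=
          Finset.sum_congr rfl fun c' _ => (Finset.mul_sum _ _ _).symm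
      _ = (∑ c' : γ, Φ b c') * (∑ a' : α, Ψ a' b) := (Finset.sum_mul _ _ _).symm
  rw [e1,
    show (∑ c' : γ, Φ b c' * Ψ a b) = (∑ c' : γ, Φ b c') * Ψ a b from (Finset.sum_mul _ _ _).symm,
    show (∑ a' : α, Φ b c * Ψ a' b) = Φ b c * ∑ a' : α, Ψ a' b from (Finset.mul_sum _ _ _).symm]
  ring

lemma prod_ite_zero' {ι : Type} [Fintype ι] (p : ι → Prop) [DecidablePred p] (f : ι → ℝ) :
    (if (∀ l, p l) then ∏ l, f l else 0) = ∏ l, (if p l then f l else 0) := by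
  by_cases h : ∀ l, p l
  · rw [if_pos h]; exact Finset.prod_congr rfl (fun l _ => (if_pos (h l)).symm)
  · rw [if_neg h]; push_neg at h; obtain ⟨l0, h0⟩ := h
    exact (Finset.prod_eq_zero (Finset.mem_univ l0)
      (show (if p l0 then f l0 else 0) = 0 from if_neg h0)).symm

lemma sum_prod_swap {n k : ℕ} (τ : Fin k → Type) [∀ t, Fintype (τ t)] [∀ t, DecidableEq (τ t)]
    (G : Fin n → (∀ t, τ t) → ℝ) :
    (∑ z : ∀ t, Fin n → τ t, ∏ l, G l (fun t => z t l))
      = ∏ l, ∑ v : ∀ t, τ t, G l v := by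
  have h1 : (∑ z : ∀ t, Fin n → τ t, ∏ l, G l (fun t => z t l))
      = ∑ w : Fin n → ∀ t, τ t, ∏ l, G l (w l) :=
    Fintype.sum_equiv (Equiv.piComm fun t _ => τ t) _ _ (fun z => rfl)
  rw [h1, Fintype.prod_sum (fun l v => G l v)]

set_option maxHeartbeats 1000000 in
lemma chain_core (k s' : ℕ) (h0 : 0 < k) (hs : s' + 1 < k) (hs1 : s' < k - 1)
    (𝒵 : Fin k → Type) [∀ t, Fintype (𝒵 t)] [∀ t, DecidableEq (𝒵 t)]
    (𝒴P : Type) (Wy : 𝒵 ⟨0, h0⟩ → 𝒴P → ℝ)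
    (Wv : ∀ t : Fin (k - 1), 𝒵 ⟨t.val, by omega⟩ → 𝒵 ⟨t.val + 1, by omega⟩ → ℝ) :
    ∃ (φ : 𝒵 ⟨0, h0⟩ → 𝒴P → 𝒵 ⟨s', by omega⟩ → ℝ) (ψ : 𝒵 ⟨s' + 1, hs⟩ → ℝ),
      ∀ (x0 : 𝒵 ⟨0, h0⟩) (η : 𝒴P) (βv : 𝒵 ⟨s', by omega⟩) (αv : 𝒵 ⟨s' + 1, hs⟩),
        (∑ v : ∀ t, 𝒵 t,
          if (v ⟨0, h0⟩ = x0 ∧ v ⟨s' + 1, hs⟩ = αv ∧ v ⟨s', by omega⟩ = βv) then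
            Wy (v ⟨0, h0⟩) η
              * ∏ t : Fin (k - 1), Wv t (v ⟨t.val, by omega⟩) (v ⟨t.val + 1, by omega⟩)
          else 0)
        = φ x0 η βv * (Wv ⟨s', hs1⟩ βv αv * ψ αv) := by
  classical
  set p : Fin k → Prop := fun t => t.val ≤ s' with hp
  refine ⟨fun x0 η βv => ∑ u : ∀ t : {t : Fin k // t.val ≤ s'}, 𝒵 t.val,
      if (u ⟨⟨0, h0⟩, Nat.zero_le s'⟩ = x0 ∧ u ⟨⟨s', by omega⟩, le_refl s'⟩ = βv) then
        Wy (u ⟨⟨0, h0⟩, Nat.zero_le s'⟩) η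
          * ∏ t : Fin (k - 1),
              (if h : t.val < s' then
                Wv t (u ⟨⟨t.val, by omega⟩, show t.val ≤ s' from h.le⟩) (u ⟨⟨t.val + 1, by omega⟩, show t.val + 1 ≤ s' from h⟩)
              else 1)
      else 0,
    fun αv => ∑ w : ∀ t : {t : Fin k // ¬ t.val ≤ s'}, 𝒵 t.val,
      if (w ⟨⟨s' + 1, hs⟩, Nat.not_succ_le_self s'⟩ = αv) then
        ∏ t : Fin (k - 1),
          (if h : s' < t.val then
            Wv t (w ⟨⟨t.val, by omega⟩, show ¬ (t.val ≤ s') by omega⟩) (w ⟨⟨t.val + 1, by omega⟩, show ¬ (t.val + 1 ≤ s') by omega⟩)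
          else 1)
      else 0, ?_⟩
  intro x0 η βv αv
  set E := Equiv.piEquivPiSubtypeProd p 𝒵 with hE
  set F : (∀ t, 𝒵 t) → ℝ := fun v =>
    if (v ⟨0, h0⟩ = x0 ∧ v ⟨s' + 1, hs⟩ = αv ∧ v ⟨s', by omega⟩ = βv) then
      Wy (v ⟨0, h0⟩) η
        * ∏ t : Fin (k - 1), Wv t (v ⟨t.val, by omega⟩) (v ⟨t.val + 1, by omega⟩)
    else 0 with hF
  have key : ∀ (u : ∀ t : {t : Fin k // p t}, 𝒵 t.val) (w : ∀ t : {t : Fin k // ¬ p t}, 𝒵 t.val),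
      F (E.symm (u, w))
        = (if (u ⟨⟨0, h0⟩, Nat.zero_le s'⟩ = x0 ∧ u ⟨⟨s', by omega⟩, le_refl s'⟩ = βv) then
            Wy (u ⟨⟨0, h0⟩, Nat.zero_le s'⟩) η
              * ∏ t : Fin (k - 1),
                  (if h : t.val < s' then
                    Wv t (u ⟨⟨t.val, by omega⟩, show t.val ≤ s' from h.le⟩) (u ⟨⟨t.val + 1, by omega⟩, show t.val + 1 ≤ s' from h⟩)
                  else 1)
          else 0)
          * (Wv ⟨s', hs1⟩ βv αv
            * (if (w ⟨⟨s' + 1, hs⟩, Nat.not_succ_le_self s'⟩ = αv) then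
                ∏ t : Fin (k - 1),
                  (if h : s' < t.val then
                    Wv t (w ⟨⟨t.val, by omega⟩, show ¬ (t.val ≤ s') by omega⟩) (w ⟨⟨t.val + 1, by omega⟩, show ¬ (t.val + 1 ≤ s') by omega⟩)
                  else 1)
              else 0)) := by
    intro u w
    simp only [hF, hE, Equiv.piEquivPiSubtypeProd_symm_apply, hp]
    rw [dif_pos (show ((⟨0, h0⟩ : Fin k)).val ≤ s' from Nat.zero_le s'),
        dif_neg (show ¬ ((⟨s' + 1, hs⟩ : Fin k)).val ≤ s' from Nat.not_succ_le_self s'),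
        dif_pos (show ((⟨s', by omega⟩ : Fin k)).val ≤ s' from le_refl s')]
    by_cases h1 : u ⟨⟨0, h0⟩, Nat.zero_le s'⟩ = x0
    · by_cases h2 : w ⟨⟨s' + 1, hs⟩, Nat.not_succ_le_self s'⟩ = αv
      · by_cases h3 : u ⟨⟨s', by omega⟩, le_refl s'⟩ = βv
        · rw [if_pos ⟨h1, h2, h3⟩, if_pos ⟨h1, h3⟩, if_pos h2]
          subst h2; subst h3
          have hsplit : (∏ t : Fin (k - 1),
              Wv t (if h : (⟨t.val, by omega⟩ : Fin k).val ≤ s' then u ⟨⟨t.val, by omega⟩, h⟩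
                    else w ⟨⟨t.val, by omega⟩, h⟩)
                   (if h : (⟨t.val + 1, by omega⟩ : Fin k).val ≤ s' then u ⟨⟨t.val + 1, by omega⟩, h⟩
                    else w ⟨⟨t.val + 1, by omega⟩, h⟩))
              = (∏ t : Fin (k - 1),
                  (if h : t.val < s' then
                    Wv t (u ⟨⟨t.val, by omega⟩, show t.val ≤ s' from h.le⟩) (u ⟨⟨t.val + 1, by omega⟩, show t.val + 1 ≤ s' from h⟩)
                  else 1))
                * ((∏ t : Fin (k - 1),
                    (if h : t.val = s' then
                      Wv t (u ⟨⟨t.val, by omega⟩, show t.val ≤ s' from h.le⟩) (w ⟨⟨t.val + 1, by omega⟩, show ¬ (t.val + 1 ≤ s') by omega⟩)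
                    else 1))
                  * (∏ t : Fin (k - 1),
                      (if h : s' < t.val then
                        Wv t (w ⟨⟨t.val, by omega⟩, show ¬ (t.val ≤ s') by omega⟩) (w ⟨⟨t.val + 1, by omega⟩, show ¬ (t.val + 1 ≤ s') by omega⟩)
                      else 1))) := by
            rw [← Finset.prod_mul_distrib, ← Finset.prod_mul_distrib]
            refine Finset.prod_congr rfl fun t _ => ?_
            rcases Nat.lt_trichotomy t.val s' with h | h | h
            · rw [dif_pos (show ((⟨t.val, by omega⟩ : Fin k)).val ≤ s' from h.le),
                  dif_pos (show ((⟨t.val + 1, by omega⟩ : Fin k)).val ≤ s' from h),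
                  dif_pos h, dif_neg (show ¬ t.val = s' by omega),
                  dif_neg (show ¬ s' < t.val by omega), mul_one, mul_one]
            · rw [dif_pos (show ((⟨t.val, by omega⟩ : Fin k)).val ≤ s' from h.le),
                  dif_neg (show ¬ ((⟨t.val + 1, by omega⟩ : Fin k)).val ≤ s' from
                    (by omega : ¬ (t.val + 1 ≤ s'))),
                  dif_neg (show ¬ t.val < s' by omega), dif_pos h,
                  dif_neg (show ¬ s' < t.val by omega), one_mul, mul_one]
            · rw [dif_neg (show ¬ ((⟨t.val, by omega⟩ : Fin k)).val ≤ s' from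
                    (by omega : ¬ (t.val ≤ s'))),
                  dif_neg (show ¬ ((⟨t.val + 1, by omega⟩ : Fin k)).val ≤ s' from
                    (by omega : ¬ (t.val + 1 ≤ s'))),
                  dif_neg (show ¬ t.val < s' by omega), dif_neg (show ¬ t.val = s' by omega),
                  dif_pos h, one_mul, one_mul]
          rw [hsplit]
          have hmid : (∏ t : Fin (k - 1),
              (if h : t.val = s' then
                Wv t (u ⟨⟨t.val, by omega⟩, show t.val ≤ s' from h.le⟩) (w ⟨⟨t.val + 1, by omega⟩, show ¬ (t.val + 1 ≤ s') by omega⟩)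
              else 1))
              = Wv ⟨s', hs1⟩ (u ⟨⟨s', by omega⟩, le_refl s'⟩)
                  (w ⟨⟨s' + 1, hs⟩, Nat.not_succ_le_self s'⟩) := by
            rw [Finset.prod_eq_single (⟨s', hs1⟩ : Fin (k - 1))]
            · rw [dif_pos rfl]
            · intro t _ ht
              rw [dif_neg (fun hc => ht (Fin.ext hc))]
            · intro hmem; exact absurd (Finset.mem_univ _) hmem
          rw [hmid]; ring
        · rw [if_neg (fun hc => h3 hc.2.2), if_neg (fun hc => h3 hc.2), zero_mul]
      · rw [if_neg (fun hc => h2 hc.2.1), if_neg h2, mul_zero, mul_zero]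
    · rw [if_neg (fun hc => h1 hc.1), if_neg (fun hc => h1 hc.1), zero_mul]
  calc (∑ v : ∀ t, 𝒵 t, F v)
      = ∑ q : (∀ t : {t : Fin k // p t}, 𝒵 t.val) × (∀ t : {t : Fin k // ¬ p t}, 𝒵 t.val),
          F (E.symm q) := (Equiv.sum_comp E.symm F).symm
    _ = ∑ u, ∑ w, F (E.symm (u, w)) := Fintype.sum_prod_type (fun q => F (E.symm q))
    _ = _ := by
        simp only [key]
        rw [show (∑ u : ∀ t : {t : Fin k // p t}, 𝒵 t.val, ∑ w : ∀ t : {t : Fin k // ¬ p t}, 𝒵 t.val,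
            (if (u ⟨⟨0, h0⟩, Nat.zero_le s'⟩ = x0 ∧ u ⟨⟨s', by omega⟩, le_refl s'⟩ = βv) then
              Wy (u ⟨⟨0, h0⟩, Nat.zero_le s'⟩) η
                * ∏ t : Fin (k - 1),
                    (if h : t.val < s' then
                      Wv t (u ⟨⟨t.val, by omega⟩, show t.val ≤ s' from h.le⟩) (u ⟨⟨t.val + 1, by omega⟩, show t.val + 1 ≤ s' from h⟩)
                    else 1)
            else 0)
            * (Wv ⟨s', hs1⟩ βv αv
              * (if (w ⟨⟨s' + 1, hs⟩, Nat.not_succ_le_self s'⟩ = αv) then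
                  ∏ t : Fin (k - 1),
                    (if h : s' < t.val then
                      Wv t (w ⟨⟨t.val, by omega⟩, show ¬ (t.val ≤ s') by omega⟩) (w ⟨⟨t.val + 1, by omega⟩, show ¬ (t.val + 1 ≤ s') by omega⟩)
                    else 1)
                else 0)))
          = ∑ u : ∀ t : {t : Fin k // p t}, 𝒵 t.val,
            (if (u ⟨⟨0, h0⟩, Nat.zero_le s'⟩ = x0 ∧ u ⟨⟨s', by omega⟩, le_refl s'⟩ = βv) then
              Wy (u ⟨⟨0, h0⟩, Nat.zero_le s'⟩) η
                * ∏ t : Fin (k - 1),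
                    (if h : t.val < s' then
                      Wv t (u ⟨⟨t.val, by omega⟩, show t.val ≤ s' from h.le⟩) (u ⟨⟨t.val + 1, by omega⟩, show t.val + 1 ≤ s' from h⟩)
                    else 1)
            else 0)
            * (Wv ⟨s', hs1⟩ βv αv
              * ∑ w : ∀ t : {t : Fin k // ¬ p t}, 𝒵 t.val,
                (if (w ⟨⟨s' + 1, hs⟩, Nat.not_succ_le_self s'⟩ = αv) then
                  ∏ t : Fin (k - 1),
                    (if h : s' < t.val then
                      Wv t (w ⟨⟨t.val, by omega⟩, show ¬ (t.val ≤ s') by omega⟩) (w ⟨⟨t.val + 1, by omega⟩, show ¬ (t.val + 1 ≤ s') by omega⟩)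
                    else 1)
                else 0))
          from by
            refine Finset.sum_congr rfl fun u _ => ?_
            rw [← Finset.mul_sum, ← Finset.mul_sum]]
        rw [← Finset.sum_mul]

set_option maxHeartbeats 1000000 in
lemma big_split (k n i' s' : ℕ) (h0 : 0 < k) (hs : s' + 1 < k) (hs1 : s' < k - 1) (hi : i' ≤ n)
    (𝒵 : Fin k → Type) [∀ t, Fintype (𝒵 t)] [∀ t, DecidableEq (𝒵 t)]
    (𝒴P : Type) (Wy : 𝒵 ⟨0, h0⟩ → 𝒴P → ℝ)
    (Wv : ∀ t : Fin (k - 1), 𝒵 ⟨t.val, by omega⟩ → 𝒵 ⟨t.val + 1, by omega⟩ → ℝ) :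
    ∃ (Φ : (Fin i' → 𝒵 ⟨s', by omega⟩) → (Fin n → 𝒵 ⟨0, h0⟩) → (Fin n → 𝒴P) → ℝ)
      (Ψ : (Fin i' → 𝒵 ⟨s' + 1, hs⟩) → (Fin i' → 𝒵 ⟨s', by omega⟩) → ℝ),
      ∀ (a : Fin i' → 𝒵 ⟨s' + 1, hs⟩) (b : Fin i' → 𝒵 ⟨s', by omega⟩)
        (x : Fin n → 𝒵 ⟨0, h0⟩) (η : Fin n → 𝒴P),
        (∑ z : ∀ t, Fin n → 𝒵 t,
          if ((∀ l : Fin i', z ⟨s' + 1, hs⟩ ⟨l.val, by omega⟩ = a l)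
              ∧ (∀ l : Fin i', z ⟨s', by omega⟩ ⟨l.val, by omega⟩ = b l)
              ∧ z ⟨0, h0⟩ = x) then
            ∏ l : Fin n, (Wy (z ⟨0, h0⟩ l) (η l)
              * ∏ t : Fin (k - 1), Wv t (z ⟨t.val, by omega⟩ l) (z ⟨t.val + 1, by omega⟩ l))
          else 0)
        = Φ b x η * Ψ a b := by
  classical
  obtain ⟨φ, ψ, hcore⟩ := chain_core k s' h0 hs hs1 𝒵 𝒴P Wy Wv
  refine ⟨fun b x η => ∏ l : Fin n,
      (if h : l.val < i' then φ (x l) (η l) (b ⟨l.val, h⟩)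
      else (∑ v : ∀ t, 𝒵 t,
        if v ⟨0, h0⟩ = x l then
          Wy (v ⟨0, h0⟩) (η l)
            * ∏ t : Fin (k - 1), Wv t (v ⟨t.val, by omega⟩) (v ⟨t.val + 1, by omega⟩)
        else 0)),
    fun a b => ∏ l : Fin n,
      (if h : l.val < i' then Wv ⟨s', hs1⟩ (b ⟨l.val, h⟩) (a ⟨l.val, h⟩) * ψ (a ⟨l.val, h⟩)
      else 1), ?_⟩
  intro a b x η
  set G : Fin n → (∀ t, 𝒵 t) → ℝ := fun l v =>
    if (v ⟨0, h0⟩ = x l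
        ∧ (∀ h : l.val < i', v ⟨s' + 1, hs⟩ = a ⟨l.val, h⟩)
        ∧ (∀ h : l.val < i', v ⟨s', by omega⟩ = b ⟨l.val, h⟩)) then
      Wy (v ⟨0, h0⟩) (η l)
        * ∏ t : Fin (k - 1), Wv t (v ⟨t.val, by omega⟩) (v ⟨t.val + 1, by omega⟩)
    else 0 with hG
  have step1 : (∑ z : ∀ t, Fin n → 𝒵 t,
      if ((∀ l : Fin i', z ⟨s' + 1, hs⟩ ⟨l.val, by omega⟩ = a l)
          ∧ (∀ l : Fin i', z ⟨s', by omega⟩ ⟨l.val, by omega⟩ = b l)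
          ∧ z ⟨0, h0⟩ = x) then
        ∏ l : Fin n, (Wy (z ⟨0, h0⟩ l) (η l)
          * ∏ t : Fin (k - 1), Wv t (z ⟨t.val, by omega⟩ l) (z ⟨t.val + 1, by omega⟩ l))
      else 0)
      = ∑ z : ∀ t, Fin n → 𝒵 t, ∏ l : Fin n, G l (fun t => z t l) := by
    refine Finset.sum_congr rfl fun z _ => ?_
    have hiff : ((∀ l : Fin i', z ⟨s' + 1, hs⟩ ⟨l.val, by omega⟩ = a l)
          ∧ (∀ l : Fin i', z ⟨s', by omega⟩ ⟨l.val, by omega⟩ = b l)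
          ∧ z ⟨0, h0⟩ = x)
        ↔ (∀ l : Fin n, (z ⟨0, h0⟩ l = x l
            ∧ (∀ h : l.val < i', z ⟨s' + 1, hs⟩ l = a ⟨l.val, h⟩)
            ∧ (∀ h : l.val < i', z ⟨s', by omega⟩ l = b ⟨l.val, h⟩))) := by
      constructor
      · rintro ⟨H1, H2, H3⟩ l
        exact ⟨congrFun H3 l, fun h => H1 ⟨l.val, h⟩, fun h => H2 ⟨l.val, h⟩⟩
      · intro H
        refine ⟨fun l => (H ⟨l.val, by omega⟩).2.1 l.isLt,
          fun l => (H ⟨l.val, by omega⟩).2.2 l.isLt, funext fun l => (H l).1⟩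
    rw [hG]
    simp only []
    by_cases hcnd : ((∀ l : Fin i', z ⟨s' + 1, hs⟩ ⟨l.val, by omega⟩ = a l)
        ∧ (∀ l : Fin i', z ⟨s', by omega⟩ ⟨l.val, by omega⟩ = b l)
        ∧ z ⟨0, h0⟩ = x)
    · rw [if_pos hcnd]
      have hAll := hiff.mp hcnd
      exact Finset.prod_congr rfl fun l _ => (if_pos (hAll l)).symm
    · rw [if_neg hcnd]
      have hnall := fun H => hcnd (hiff.mpr H)
      obtain ⟨l0, hl0⟩ := not_forall.mp hnall
      exact (Finset.prod_eq_zero (Finset.mem_univ l0) (by rw [if_neg hl0])).symm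
  rw [step1, sum_prod_swap]
  rw [← Finset.prod_mul_distrib]
  refine Finset.prod_congr rfl fun l _ => ?_
  by_cases h : l.val < i'
  · rw [dif_pos h, dif_pos h]
    have step2 : (∑ v : ∀ t, 𝒵 t, G l v)
        = ∑ v : ∀ t, 𝒵 t,
          (if (v ⟨0, h0⟩ = x l ∧ v ⟨s' + 1, hs⟩ = a ⟨l.val, h⟩ ∧ v ⟨s', by omega⟩ = b ⟨l.val, h⟩) then
            Wy (v ⟨0, h0⟩) (η l)
              * ∏ t : Fin (k - 1), Wv t (v ⟨t.val, by omega⟩) (v ⟨t.val + 1, by omega⟩)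
          else 0) := by
      refine Finset.sum_congr rfl fun v _ => ?_
      rw [hG]
      simp only []
      refine if_congr ?_ rfl rfl
      constructor
      · rintro ⟨H1, H2, H3⟩; exact ⟨H1, H2 h, H3 h⟩
      · rintro ⟨H1, H2, H3⟩; exact ⟨H1, fun _ => H2, fun _ => H3⟩
    rw [step2, hcore]
  · rw [dif_neg h, dif_neg h, mul_one]
    refine Finset.sum_congr rfl fun v _ => ?_
    rw [hG]
    simp only []
    refine if_congr ?_ rfl rfl
    constructor
    · rintro ⟨H1, _, _⟩; exact H1
    · intro H1; exact ⟨H1, fun h' => absurd h' h, fun h' => absurd h' h⟩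

set_option maxHeartbeats 4000000 in
set_option synthInstance.maxSize 2000 in
/-- factorization lemma: k-receiver broadcast channel with virtual receivers.
Here `Z ⟨0⟩` plays the role of `X` (so `V₀ = X`) and `Z s` for `1 ≤ s ≤ k−1` are the virtual
receivers `V_s`; `Wy` is the broadcast channel and `Wv s` the channel from `V_s` to `V_{s+1}`
(indices shifted by one). If the n-letter joint law has the stated product form, then for
every `1 ≤ s ≤ k−1` and `1 ≤ i ≤ n` the Markov chain
`V_{s,1}^{i−1} → V_{s−1,1}^{i−1} → (Xⁿ, Y₁ⁿ,…,Y_kⁿ, M₁,…,M_k)` holds. -/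
theorem stmt7 {Ω : Type} [Fintype Ω] (μ : FinProb Ω)
    (k n : ℕ) (hk : 1 ≤ k)
    (ℳ : Fin k → Type) [∀ j, Fintype (ℳ j)] [∀ j, DecidableEq (ℳ j)]
    (𝒴 : Fin k → Type) [∀ j, Fintype (𝒴 j)] [∀ j, DecidableEq (𝒴 j)]
    (𝒵 : Fin k → Type) [∀ s, Fintype (𝒵 s)] [∀ s, DecidableEq (𝒵 s)]
    (Ms : ∀ j, Ω → ℳ j) (Y : ∀ j, Ω → Fin n → 𝒴 j) (Z : ∀ s, Ω → Fin n → 𝒵 s)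
    (Wy : 𝒵 ⟨0, hk⟩ → (∀ j, 𝒴 j) → ℝ)
    (Wv : ∀ s : Fin (k - 1), 𝒵 ⟨s.val, by omega⟩ → 𝒵 ⟨s.val + 1, by omega⟩ → ℝ)
    (hfact : ∀ (ms : ∀ j, ℳ j) (zs : ∀ s, Fin n → 𝒵 s) (ys : ∀ j, Fin n → 𝒴 j),
      prob μ (fun ω => ((fun j => Ms j ω), (fun s => Z s ω), (fun j => Y j ω)))
          (ms, zs, ys)
        = prob μ (fun ω => ((fun j => Ms j ω), Z ⟨0, hk⟩ ω)) (ms, zs ⟨0, hk⟩)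
          * ∏ i : Fin n,
              (Wy (zs ⟨0, hk⟩ i) (fun j => ys j i)
                * ∏ s : Fin (k - 1),
                    Wv s (zs ⟨s.val, by omega⟩ i) (zs ⟨s.val + 1, by omega⟩ i)))
    (s i : ℕ) (hs1 : 1 ≤ s) (hsk : s ≤ k - 1) (hi1 : 1 ≤ i) (hin : i ≤ n) :
    Markov μ
      (seg (Z ⟨s, by omega⟩) 0 (i - 1) (by omega))
      (seg (Z ⟨s - 1, by omega⟩) 0 (i - 1) (by omega))
      (fun ω => (Z ⟨0, hk⟩ ω, (fun j => Y j ω), (fun j => Ms j ω))) := by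
  classical
  obtain ⟨i', rfl⟩ : ∃ i'', i = i'' + 1 := ⟨i - 1, by omega⟩
  obtain ⟨s', rfl⟩ : ∃ s'', s = s'' + 1 := ⟨s - 1, by omega⟩
  have hs : s' + 1 < k := by omega
  have hs1' : s' < k - 1 := by omega
  have hin' : i' ≤ n := by omega
  obtain ⟨Φ0, Ψ0, hbs⟩ := big_split k n i' s' hk hs hs1' hin' 𝒵 (∀ j, 𝒴 j) Wy Wv
  refine markov_of_factor μ _ _ _
    (fun b c => prob μ (fun ω => ((fun j => Ms j ω), Z ⟨0, hk⟩ ω)) (c.2.2, c.1)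
        * Φ0 b c.1 (fun l j => c.2.1 j l))
    Ψ0 ?_
  rintro a b ⟨x, yy, mm⟩
  have key := prob_comp μ
    (fun ω => ((fun j => Ms j ω), (fun t => Z t ω), (fun j => Y j ω)))
    (fun u : (∀ j, ℳ j) × (∀ t, Fin n → 𝒵 t) × (∀ j, Fin n → 𝒴 j) =>
      ((fun l : Fin (i' + 1 - 1) =>
          u.2.1 ⟨s' + 1, by omega⟩ ⟨0 + l.val, by have := l.isLt; omega⟩),
       (fun l : Fin (i' + 1 - 1) =>
          u.2.1 ⟨s' + 1 - 1, by omega⟩ ⟨0 + l.val, by have := l.isLt; omega⟩),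
       (u.2.1 ⟨0, hk⟩, u.2.2, u.1)))
    (a, b, (x, yy, mm))
  have hb : (∑ z : ∀ t, Fin n → 𝒵 t,
      if ((∀ l : Fin i', z ⟨s' + 1, hs⟩ ⟨l.val, by have := l.isLt; omega⟩ = a l)
          ∧ (∀ l : Fin i', z ⟨s', by omega⟩ ⟨l.val, by have := l.isLt; omega⟩ = b l)
          ∧ z ⟨0, hk⟩ = x) then
        ∏ l : Fin n, (Wy (z ⟨0, hk⟩ l) (fun j => yy j l)
          * ∏ t : Fin (k - 1), Wv t (z ⟨t.val, by omega⟩ l) (z ⟨t.val + 1, by omega⟩ l))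
      else 0)
      = Φ0 b x (fun l j => yy j l) * Ψ0 a b := hbs a b x (fun l j => yy j l)
  have hsw : ∀ (m : ∀ j, ℳ j) (z : ∀ t, Fin n → 𝒵 t) (y : ∀ j, Fin n → 𝒴 j),
      (if ((fun l : Fin (i' + 1 - 1) =>
            z ⟨s' + 1, by omega⟩ ⟨0 + l.val, by have := l.isLt; omega⟩) = a
          ∧ (fun l : Fin (i' + 1 - 1) =>
            z ⟨s' + 1 - 1, by omega⟩ ⟨0 + l.val, by have := l.isLt; omega⟩) = b
          ∧ (z ⟨0, hk⟩ = x ∧ y = yy ∧ m = mm)) then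
        prob μ (fun ω => ((fun j => Ms j ω), Z ⟨0, hk⟩ ω)) (m, z ⟨0, hk⟩)
          * ∏ l : Fin n, (Wy (z ⟨0, hk⟩ l) (fun j => y j l)
            * ∏ t : Fin (k - 1), Wv t (z ⟨t.val, by omega⟩ l) (z ⟨t.val + 1, by omega⟩ l))
      else 0)
      = if m = mm then
          (if y = yy then
            prob μ (fun ω => ((fun j => Ms j ω), Z ⟨0, hk⟩ ω)) (mm, x)
              * (if ((∀ l : Fin i', z ⟨s' + 1, hs⟩ ⟨l.val, by have := l.isLt; omega⟩ = a l)
                  ∧ (∀ l : Fin i', z ⟨s', by omega⟩ ⟨l.val, by have := l.isLt; omega⟩ = b l)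
                  ∧ z ⟨0, hk⟩ = x) then
                  ∏ l : Fin n, (Wy (z ⟨0, hk⟩ l) (fun j => yy j l)
                    * ∏ t : Fin (k - 1), Wv t (z ⟨t.val, by omega⟩ l) (z ⟨t.val + 1, by omega⟩ l))
                else 0)
          else 0)
        else 0 := by
    intro m z y
    have hco : ∀ (lv : ℕ) (p : 0 + lv < n) (p' : lv < n), (⟨0 + lv, p⟩ : Fin n) = ⟨lv, p'⟩ :=
      fun lv p p' => Fin.ext (Nat.zero_add lv)
    by_cases hm : m = mm
    · subst hm
      by_cases hy : y = yy
      · subst hy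
        rw [if_pos rfl, if_pos rfl]
        by_cases hcl : ((∀ l : Fin i', z ⟨s' + 1, hs⟩ ⟨l.val, by have := l.isLt; omega⟩ = a l)
            ∧ (∀ l : Fin i', z ⟨s', by omega⟩ ⟨l.val, by have := l.isLt; omega⟩ = b l)
            ∧ z ⟨0, hk⟩ = x)
        · rw [if_pos hcl]
          obtain ⟨H1, H2, H3⟩ := hcl
          have hmess : ((fun l : Fin (i' + 1 - 1) =>
                z ⟨s' + 1, by omega⟩ ⟨0 + l.val, by have := l.isLt; omega⟩) = a
              ∧ (fun l : Fin (i' + 1 - 1) =>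
                z ⟨s' + 1 - 1, by omega⟩ ⟨0 + l.val, by have := l.isLt; omega⟩) = b
              ∧ (z ⟨0, hk⟩ = x ∧ y = y ∧ m = m)) := by
            refine ⟨funext fun l => ?_, funext fun l => ?_, H3, rfl, rfl⟩
            · rw [hco l.val (by have := l.isLt; omega) (by have := l.isLt; omega)]
              exact H1 ⟨l.val, l.isLt⟩
            · rw [hco l.val (by have := l.isLt; omega) (by have := l.isLt; omega)]
              exact H2 ⟨l.val, l.isLt⟩
          rw [if_pos ⟨hmess.1, hmess.2.1, H3, rfl, rfl⟩, H3]
        · rw [if_neg hcl, mul_zero]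
          rw [if_neg]
          rintro ⟨H1, H2, H3, -, -⟩
          refine hcl ⟨fun l => ?_, fun l => ?_, H3⟩
          · have := congrFun H1 ⟨l.val, by have := l.isLt; omega⟩
            rwa [hco l.val (by have := l.isLt; omega) (by have := l.isLt; omega)] at this
          · have := congrFun H2 ⟨l.val, by have := l.isLt; omega⟩
            rwa [hco l.val (by have := l.isLt; omega) (by have := l.isLt; omega)] at this
      · rw [if_neg hy, if_neg (fun hc => hy hc.2.2.2.1)]
        simp
    · rw [if_neg hm, if_neg (fun hc => hm hc.2.2.2.2)]
  refine key.trans ?_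
  simp only [Fintype.sum_prod_type, Prod.mk.injEq, hfact]
  simp only [hsw, Finset.sum_ite_irrel, Finset.sum_const_zero, Finset.sum_ite_eq',
    Finset.mem_univ, if_true]
  rw [← Finset.mul_sum, hb, mul_assoc]

end LN
end
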